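/- arXiv:2310.04955 — 2 statements merged into one kernel-verified Lean document; each statement's English description precedes it below -/
import Mathlib

section
/- Let Z, Y, A be finitely-valued random variables on a common probability space. If H(Y|A) = 0 (extreme attribute bias: the protected attribute completely determines the target) and I(Z;A) = 0 (the attribute is removed from the feature), then I(Z;Y) = 0. (Proposition 1.) -/
open MeasureTheory ProbabilityTheory

/-- Shannon entropy of a finitely-valued random variable `X` under the measure `μ`,
computed as `-∑ s, p(s) log p(s)` where `p(s) = μ (X ⁻¹' {s})`. -/
noncomputable def entropy {Ω S : Type*} [MeasurableSpace Ω] [Fintype S]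
    (μ : Measure Ω) (X : Ω → S) : ℝ :=
  - ∑ s : S, (μ (X ⁻¹' {s})).toReal * Real.log (μ (X ⁻¹' {s})).toReal

/-- Conditional entropy `H(Y|A) = H(⟨Y,A⟩) - H(A)`. -/
noncomputable def condEntropy {Ω T U : Type*} [MeasurableSpace Ω] [Fintype T] [Fintype U]
    (μ : Measure Ω) (Y : Ω → T) (A : Ω → U) : ℝ :=
  entropy μ (fun ω => (Y ω, A ω)) - entropy μ A

/-- Mutual information `I(Z;Y) = H(Z) + H(Y) - H(⟨Z,Y⟩)`. -/
noncomputable def mutualInfo {Ω S T : Type*} [MeasurableSpace Ω] [Fintype S] [Fintype T]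
    (μ : Measure Ω) (Z : Ω → S) (Y : Ω → T) : ℝ :=
  entropy μ Z + entropy μ Y - entropy μ (fun ω => (Z ω, Y ω))

/-- Conditional mutual information
`I(Z;Y|A) = H(⟨Z,A⟩) + H(⟨Y,A⟩) - H(⟨Z,Y,A⟩) - H(A)`. -/
noncomputable def condMutualInfo {Ω S T U : Type*} [MeasurableSpace Ω]
    [Fintype S] [Fintype T] [Fintype U]
    (μ : Measure Ω) (Z : Ω → S) (Y : Ω → T) (A : Ω → U) : ℝ :=
  entropy μ (fun ω => (Z ω, A ω)) + entropy μ (fun ω => (Y ω, A ω))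
    - entropy μ (fun ω => (Z ω, Y ω, A ω)) - entropy μ A



namespace ExtremeBiasAux

open MeasureTheory Finset

section A
set_option linter.unusedSectionVars false
variable {Ω : Type*} [MeasurableSpace Ω] {P : Measure Ω} [IsProbabilityMeasure P]

lemma toReal_mono' {A B : Set Ω} (h : A ⊆ B) : (P A).toReal ≤ (P B).toReal :=
  ENNReal.toReal_mono (measure_ne_top P B) (measure_mono h)

lemma pair_preimage {S T : Type*} (X : Ω → S) (W : Ω → T) (x : S) (w : T) :
    (fun ω => (X ω, W ω)) ⁻¹' {(x, w)} = X ⁻¹' {x} ∩ W ⁻¹' {w} := by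
  ext ω; simp [Prod.ext_iff]

lemma sum_meas_inter {S : Type*} [Fintype S] [MeasurableSpace S] [MeasurableSingletonClass S]
    {X : Ω → S} (hX : Measurable X) {B : Set Ω} (hB : MeasurableSet B) :
    ∑ s : S, (P (X ⁻¹' {s} ∩ B)).toReal = (P B).toReal := by
  have hU : (⋃ s : S, X ⁻¹' {s} ∩ B) = B := by ext ω; simp
  have hd : Pairwise (Function.onFun Disjoint fun s : S => X ⁻¹' {s} ∩ B) := by
    intro s t hst
    refine Set.disjoint_left.2 ?_
    rintro ω ⟨hs, -⟩ ⟨ht, -⟩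
    exact hst ((Set.mem_singleton_iff.1 hs).symm.trans (Set.mem_singleton_iff.1 ht))
  have hm : ∀ s : S, MeasurableSet (X ⁻¹' {s} ∩ B) := fun s =>
    (hX (measurableSet_singleton s)).inter hB
  have h := measure_iUnion (μ := P) hd hm
  rw [hU] at h
  rw [h, tsum_fintype, ENNReal.toReal_sum (fun s _ => measure_ne_top P _)]

lemma sum_pr_eq_one {S : Type*} [Fintype S] [MeasurableSpace S] [MeasurableSingletonClass S]
    {X : Ω → S} (hX : Measurable X) :
    ∑ s : S, (P (X ⁻¹' {s})).toReal = 1 := by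
  have h := sum_meas_inter (P := P) hX MeasurableSet.univ
  simpa [measure_univ] using h

lemma gibbs {ι : Type*} [Fintype ι] {a b : ι → ℝ}
    (ha : ∀ i, 0 ≤ a i) (hb : ∀ i, 0 ≤ b i)
    (hab : ∀ i, b i = 0 → a i = 0) (hsum : ∑ i, b i ≤ ∑ i, a i) :
    ∑ i, a i * Real.log (b i) ≤ ∑ i, a i * Real.log (a i) := by
  have key : ∀ i ∈ Finset.univ, a i * Real.log (b i) - a i * Real.log (a i) ≤ b i - a i := by
    intro i _
    rcases (ha i).eq_or_lt with h | h
    · rw [← h]; simpa using hb i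
    · have hbi : 0 < b i := lt_of_le_of_ne (hb i) (fun h0 => h.ne' (hab i h0.symm))
      have hlog := Real.log_le_sub_one_of_pos (div_pos hbi h)
      rw [Real.log_div hbi.ne' h.ne'] at hlog
      calc a i * Real.log (b i) - a i * Real.log (a i)
          = a i * (Real.log (b i) - Real.log (a i)) := by ring
        _ ≤ a i * (b i / a i - 1) := mul_le_mul_of_nonneg_left hlog h.le
        _ = b i - a i := by field_simp
  have hs := Finset.sum_le_sum key
  rw [Finset.sum_sub_distrib, Finset.sum_sub_distrib] at hs
  linarith

lemma entropy_comp_equiv {S T : Type*} [Fintype S] [Fintype T]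
    (X : Ω → S) (e : S ≃ T) :
    entropy P (fun ω => e (X ω)) = entropy P X := by
  unfold entropy
  have hpre : ∀ s : S, (fun ω => e (X ω)) ⁻¹' {e s} = X ⁻¹' {s} := by
    intro s; ext ω; simp
  rw [← Equiv.sum_comp e
    (fun t => (P ((fun ω => e (X ω)) ⁻¹' {t})).toReal *
      Real.log (P ((fun ω => e (X ω)) ⁻¹' {t})).toReal)]
  simp only [hpre]

lemma entropy_snd_le {S T : Type*}
    [Fintype S] [MeasurableSpace S] [MeasurableSingletonClass S]
    [Fintype T] [MeasurableSpace T] [MeasurableSingletonClass T]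
    {X : Ω → S} {W : Ω → T} (hX : Measurable X) (hW : Measurable W) :
    entropy P W ≤ entropy P (fun ω => (X ω, W ω)) := by
  unfold entropy
  rw [neg_le_neg_iff]
  have hm : ∀ w : T, ∑ x : S, (P ((fun ω => (X ω, W ω)) ⁻¹' {(x, w)})).toReal
      = (P (W ⁻¹' {w})).toReal := by
    intro w
    simp only [pair_preimage]
    exact sum_meas_inter hX (hW (measurableSet_singleton w))
  have hle : ∀ p : S × T,
      (P ((fun ω => (X ω, W ω)) ⁻¹' {p})).toReal ≤ (P (W ⁻¹' {p.2})).toReal := by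
    rintro ⟨x, w⟩
    refine toReal_mono' ?_
    rw [pair_preimage]
    exact Set.inter_subset_right
  calc ∑ p : S × T, (P ((fun ω => (X ω, W ω)) ⁻¹' {p})).toReal *
          Real.log (P ((fun ω => (X ω, W ω)) ⁻¹' {p})).toReal
      ≤ ∑ p : S × T, (P ((fun ω => (X ω, W ω)) ⁻¹' {p})).toReal *
          Real.log (P (W ⁻¹' {p.2})).toReal := by
        refine Finset.sum_le_sum fun p _ => ?_
        rcases (ENNReal.toReal_nonneg :
            (0:ℝ) ≤ (P ((fun ω => (X ω, W ω)) ⁻¹' {p})).toReal).eq_or_lt with h | h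
        · rw [← h, zero_mul, zero_mul]
        · exact mul_le_mul_of_nonneg_left (Real.log_le_log h (hle p)) h.le
    _ = ∑ w : T, ∑ x : S, (P ((fun ω => (X ω, W ω)) ⁻¹' {(x, w)})).toReal *
          Real.log (P (W ⁻¹' {w})).toReal := by
        rw [Fintype.sum_prod_type_right]
    _ = ∑ w : T, (P (W ⁻¹' {w})).toReal * Real.log (P (W ⁻¹' {w})).toReal := by
        refine Finset.sum_congr rfl fun w _ => ?_
        rw [← Finset.sum_mul, hm w]

lemma mutualInfo_nonneg {S T : Type*}
    [Fintype S] [MeasurableSpace S] [MeasurableSingletonClass S]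
    [Fintype T] [MeasurableSpace T] [MeasurableSingletonClass T]
    {Z : Ω → S} {Y : Ω → T} (hZ : Measurable Z) (hY : Measurable Y) :
    0 ≤ mutualInfo P Z Y := by
  classical
  set a : S × T → ℝ := fun p => (P ((fun ω => (Z ω, Y ω)) ⁻¹' {p})).toReal with ha_def
  set pZ : S → ℝ := fun z => (P (Z ⁻¹' {z})).toReal with hpZ_def
  set pY : T → ℝ := fun y => (P (Y ⁻¹' {y})).toReal with hpY_def
  have hmz : ∀ z, ∑ y, a (z, y) = pZ z := by
    intro z
    simp only [ha_def, hpZ_def, pair_preimage]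
    simp_rw [Set.inter_comm (Z ⁻¹' {z})]
    exact sum_meas_inter hY (hZ (measurableSet_singleton z))
  have hmy : ∀ y, ∑ z, a (z, y) = pY y := by
    intro y
    simp only [ha_def, hpY_def, pair_preimage]
    exact sum_meas_inter hZ (hY (measurableSet_singleton y))
  have hle1 : ∀ p : S × T, a p ≤ pZ p.1 := by
    rintro ⟨z, y⟩
    simp only [ha_def, hpZ_def]
    refine toReal_mono' ?_
    rw [pair_preimage]
    exact Set.inter_subset_left
  have hle2 : ∀ p : S × T, a p ≤ pY p.2 := by
    rintro ⟨z, y⟩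
    simp only [ha_def, hpY_def]
    refine toReal_mono' ?_
    rw [pair_preimage]
    exact Set.inter_subset_right
  have hanneg : ∀ p : S × T, 0 ≤ a p := fun p => ENNReal.toReal_nonneg
  have hZ1 : ∑ z, pZ z = 1 := by simp only [hpZ_def]; exact sum_pr_eq_one hZ
  have hY1 : ∑ y, pY y = 1 := by simp only [hpY_def]; exact sum_pr_eq_one hY
  have ha1 : ∑ p : S × T, a p = 1 := by
    simp only [ha_def]; exact sum_pr_eq_one (hZ.prodMk hY)
  have hsum : ∑ p : S × T, pZ p.1 * pY p.2 ≤ ∑ p : S × T, a p := by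
    rw [ha1, Fintype.sum_prod_type]
    have h : ∀ z, ∑ y, pZ z * pY y = pZ z := by
      intro z; rw [← Finset.mul_sum, hY1, mul_one]
    rw [Finset.sum_congr rfl fun z _ => h z, hZ1]
  have key := gibbs (a := a) (b := fun p : S × T => pZ p.1 * pY p.2) hanneg
    (fun p => mul_nonneg ENNReal.toReal_nonneg ENNReal.toReal_nonneg)
    (fun p hp => by
      rcases mul_eq_zero.1 hp with h | h
      · exact le_antisymm (h ▸ hle1 p) (hanneg p)
      · exact le_antisymm (h ▸ hle2 p) (hanneg p))
    hsum
  have hsplit : ∑ p : S × T, a p * Real.log (pZ p.1 * pY p.2)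
      = ∑ p : S × T, (a p * Real.log (pZ p.1) + a p * Real.log (pY p.2)) := by
    refine Finset.sum_congr rfl fun p _ => ?_
    rcases (hanneg p).eq_or_lt with h | h
    · rw [← h, zero_mul, zero_mul, zero_mul, zero_add]
    · have h1 : pZ p.1 ≠ 0 := fun h0 => (h.trans_le (h0 ▸ hle1 p)).false
      have h2 : pY p.2 ≠ 0 := fun h0 => (h.trans_le (h0 ▸ hle2 p)).false
      rw [Real.log_mul h1 h2, mul_add]
  have hA1 : ∑ p : S × T, a p * Real.log (pZ p.1) = ∑ z, pZ z * Real.log (pZ z) := by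
    rw [Fintype.sum_prod_type]
    refine Finset.sum_congr rfl fun z _ => ?_
    show ∑ y, a (z, y) * Real.log (pZ z) = _
    rw [← Finset.sum_mul, hmz z]
  have hA2 : ∑ p : S × T, a p * Real.log (pY p.2) = ∑ y, pY y * Real.log (pY y) := by
    rw [Fintype.sum_prod_type, Finset.sum_comm]
    refine Finset.sum_congr rfl fun y _ => ?_
    show ∑ z, a (z, y) * Real.log (pY y) = _
    rw [← Finset.sum_mul, hmy y]
  rw [hsplit, Finset.sum_add_distrib, hA1, hA2] at key
  unfold mutualInfo entropy
  show 0 ≤ -∑ z, pZ z * Real.log (pZ z) + -∑ y, pY y * Real.log (pY y) -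
      -∑ p : S × T, a p * Real.log (a p)
  linarith

set_option maxHeartbeats 1000000 in
lemma submod {S T U : Type*}
    [Fintype S] [MeasurableSpace S] [MeasurableSingletonClass S]
    [Fintype T] [MeasurableSpace T] [MeasurableSingletonClass T]
    [Fintype U] [MeasurableSpace U] [MeasurableSingletonClass U]
    {Z : Ω → S} {Y : Ω → T} {A : Ω → U}
    (hZ : Measurable Z) (hY : Measurable Y) (hA : Measurable A) :
    entropy P (fun ω => (Z ω, Y ω, A ω)) + entropy P A ≤
      entropy P (fun ω => (Z ω, A ω)) + entropy P (fun ω => (Y ω, A ω)) := by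
  classical
  set a : S × T × U → ℝ :=
    fun p => (P ((fun ω => (Z ω, Y ω, A ω)) ⁻¹' {p})).toReal with ha_def
  set pZA : S × U → ℝ := fun q => (P ((fun ω => (Z ω, A ω)) ⁻¹' {q})).toReal with hZA_def
  set pYA : T × U → ℝ := fun q => (P ((fun ω => (Y ω, A ω)) ⁻¹' {q})).toReal with hYA_def
  set pA : U → ℝ := fun u => (P (A ⁻¹' {u})).toReal with hA_def
  have htriple : ∀ z y u, (fun ω => (Z ω, Y ω, A ω)) ⁻¹' {(z, y, u)}
      = Z ⁻¹' {z} ∩ (Y ⁻¹' {y} ∩ A ⁻¹' {u}) := by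
    intro z y u; ext ω; simp [Prod.ext_iff, and_assoc]
  have hmargY : ∀ z u, ∑ y, a (z, y, u) = pZA (z, u) := by
    intro z u
    simp only [ha_def, hZA_def, htriple, pair_preimage]
    simp_rw [Set.inter_left_comm (Z ⁻¹' {z})]
    exact sum_meas_inter hY ((hZ (measurableSet_singleton z)).inter
      (hA (measurableSet_singleton u)))
  have hmargZ : ∀ y u, ∑ z, a (z, y, u) = pYA (y, u) := by
    intro y u
    simp only [ha_def, hYA_def, htriple, pair_preimage]
    exact sum_meas_inter hZ ((hY (measurableSet_singleton y)).inter
      (hA (measurableSet_singleton u)))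
  have hmargZA : ∀ u, ∑ z, pZA (z, u) = pA u := by
    intro u
    simp only [hZA_def, hA_def, pair_preimage]
    exact sum_meas_inter hZ (hA (measurableSet_singleton u))
  have hmargYA : ∀ u, ∑ y, pYA (y, u) = pA u := by
    intro u
    simp only [hYA_def, hA_def, pair_preimage]
    exact sum_meas_inter hY (hA (measurableSet_singleton u))
  have hle1 : ∀ p : S × T × U, a p ≤ pZA (p.1, p.2.2) := by
    rintro ⟨z, y, u⟩
    simp only [ha_def, hZA_def, htriple, pair_preimage]
    exact toReal_mono' (by rintro ω ⟨h1, h2, h3⟩; exact ⟨h1, h3⟩)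
  have hle2 : ∀ p : S × T × U, a p ≤ pYA (p.2.1, p.2.2) := by
    rintro ⟨z, y, u⟩
    simp only [ha_def, hYA_def, htriple, pair_preimage]
    exact toReal_mono' (by rintro ω ⟨h1, h2, h3⟩; exact ⟨h2, h3⟩)
  have hle3 : ∀ p : S × T × U, a p ≤ pA p.2.2 := by
    rintro ⟨z, y, u⟩
    simp only [ha_def, hA_def, htriple]
    exact toReal_mono' (by rintro ω ⟨h1, h2, h3⟩; exact h3)
  have hanneg : ∀ p : S × T × U, 0 ≤ a p := fun p => ENNReal.toReal_nonneg
  have hZAnn : ∀ q : S × U, 0 ≤ pZA q := fun q => ENNReal.toReal_nonneg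
  have hYAnn : ∀ q : T × U, 0 ≤ pYA q := fun q => ENNReal.toReal_nonneg
  have hAnn : ∀ u : U, 0 ≤ pA u := fun u => ENNReal.toReal_nonneg
  have ha1 : ∑ p : S × T × U, a p = 1 := by
    simp only [ha_def]; exact sum_pr_eq_one (hZ.prodMk (hY.prodMk hA))
  have hA1 : ∑ u, pA u = 1 := by
    simp only [hA_def]; exact sum_pr_eq_one hA
  have hsum : ∑ p : S × T × U, pZA (p.1, p.2.2) * pYA (p.2.1, p.2.2) / pA p.2.2
      ≤ ∑ p : S × T × U, a p := by
    rw [ha1]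
    calc ∑ p : S × T × U, pZA (p.1, p.2.2) * pYA (p.2.1, p.2.2) / pA p.2.2
        = ∑ z, ∑ y, ∑ u, pZA (z, u) * (pYA (y, u) / pA u) := by
          simp only [Fintype.sum_prod_type, mul_div_assoc]
      _ = ∑ z, ∑ u, ∑ y, pZA (z, u) * (pYA (y, u) / pA u) :=
          Finset.sum_congr rfl fun z _ => Finset.sum_comm
      _ = ∑ z, ∑ u, pZA (z, u) * (pA u / pA u) := by
          refine Finset.sum_congr rfl fun z _ => Finset.sum_congr rfl fun u _ => ?_
          rw [← Finset.mul_sum, ← Finset.sum_div, hmargYA u]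
      _ = ∑ u, ∑ z, pZA (z, u) * (pA u / pA u) := Finset.sum_comm
      _ = ∑ u, pA u * (pA u / pA u) := by
          refine Finset.sum_congr rfl fun u _ => ?_
          rw [← Finset.sum_mul, hmargZA u]
      _ ≤ ∑ u, pA u := by
          refine Finset.sum_le_sum fun u _ => ?_
          rcases eq_or_ne (pA u) 0 with h | h
          · rw [h]; simp
          · rw [div_self h, mul_one]
      _ = 1 := hA1
  have key := gibbs (a := a)
    (b := fun p : S × T × U => pZA (p.1, p.2.2) * pYA (p.2.1, p.2.2) / pA p.2.2)
    hanneg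
    (fun p => div_nonneg (mul_nonneg (hZAnn _) (hYAnn _)) (hAnn _))
    (fun p hp => by
      rcases div_eq_zero_iff.1 hp with h | h
      · rcases mul_eq_zero.1 h with h | h
        · exact le_antisymm (h ▸ hle1 p) (hanneg p)
        · exact le_antisymm (h ▸ hle2 p) (hanneg p)
      · exact le_antisymm (h ▸ hle3 p) (hanneg p))
    hsum
  have hsplit : ∑ p : S × T × U,
        a p * Real.log (pZA (p.1, p.2.2) * pYA (p.2.1, p.2.2) / pA p.2.2)
      = ∑ p : S × T × U, (a p * Real.log (pZA (p.1, p.2.2))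
          + a p * Real.log (pYA (p.2.1, p.2.2)) - a p * Real.log (pA p.2.2)) := by
    refine Finset.sum_congr rfl fun p _ => ?_
    rcases (hanneg p).eq_or_lt with h | h
    · rw [← h]; ring
    · have h1 : pZA (p.1, p.2.2) ≠ 0 := fun h0 => (h.trans_le (h0 ▸ hle1 p)).false
      have h2 : pYA (p.2.1, p.2.2) ≠ 0 := fun h0 => (h.trans_le (h0 ▸ hle2 p)).false
      have h3 : pA p.2.2 ≠ 0 := fun h0 => (h.trans_le (h0 ▸ hle3 p)).false
      rw [Real.log_div (mul_ne_zero h1 h2) h3, Real.log_mul h1 h2]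
      ring
  have hB1 : ∑ p : S × T × U, a p * Real.log (pZA (p.1, p.2.2))
      = ∑ q : S × U, pZA q * Real.log (pZA q) := by
    calc ∑ p : S × T × U, a p * Real.log (pZA (p.1, p.2.2))
        = ∑ z, ∑ y, ∑ u, a (z, y, u) * Real.log (pZA (z, u)) := by
          simp only [Fintype.sum_prod_type]
      _ = ∑ z, ∑ u, ∑ y, a (z, y, u) * Real.log (pZA (z, u)) :=
          Finset.sum_congr rfl fun z _ => Finset.sum_comm
      _ = ∑ z, ∑ u, pZA (z, u) * Real.log (pZA (z, u)) := by
          refine Finset.sum_congr rfl fun z _ => Finset.sum_congr rfl fun u _ => ?_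
          rw [← Finset.sum_mul, hmargY z u]
      _ = ∑ q : S × U, pZA q * Real.log (pZA q) := by rw [Fintype.sum_prod_type]
  have hB2 : ∑ p : S × T × U, a p * Real.log (pYA (p.2.1, p.2.2))
      = ∑ q : T × U, pYA q * Real.log (pYA q) := by
    calc ∑ p : S × T × U, a p * Real.log (pYA (p.2.1, p.2.2))
        = ∑ z, ∑ y, ∑ u, a (z, y, u) * Real.log (pYA (y, u)) := by
          simp only [Fintype.sum_prod_type]
      _ = ∑ y, ∑ z, ∑ u, a (z, y, u) * Real.log (pYA (y, u)) := Finset.sum_comm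
      _ = ∑ y, ∑ u, ∑ z, a (z, y, u) * Real.log (pYA (y, u)) :=
          Finset.sum_congr rfl fun y _ => Finset.sum_comm
      _ = ∑ y, ∑ u, pYA (y, u) * Real.log (pYA (y, u)) := by
          refine Finset.sum_congr rfl fun y _ => Finset.sum_congr rfl fun u _ => ?_
          rw [← Finset.sum_mul, hmargZ y u]
      _ = ∑ q : T × U, pYA q * Real.log (pYA q) := by rw [Fintype.sum_prod_type]
  have hB3 : ∑ p : S × T × U, a p * Real.log (pA p.2.2)
      = ∑ u, pA u * Real.log (pA u) := by
    calc ∑ p : S × T × U, a p * Real.log (pA p.2.2)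
        = ∑ z, ∑ y, ∑ u, a (z, y, u) * Real.log (pA u) := by
          simp only [Fintype.sum_prod_type]
      _ = ∑ z, ∑ u, ∑ y, a (z, y, u) * Real.log (pA u) :=
          Finset.sum_congr rfl fun z _ => Finset.sum_comm
      _ = ∑ z, ∑ u, pZA (z, u) * Real.log (pA u) := by
          refine Finset.sum_congr rfl fun z _ => Finset.sum_congr rfl fun u _ => ?_
          rw [← Finset.sum_mul, hmargY z u]
      _ = ∑ u, ∑ z, pZA (z, u) * Real.log (pA u) := Finset.sum_comm
      _ = ∑ u, pA u * Real.log (pA u) := by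
          refine Finset.sum_congr rfl fun u _ => ?_
          rw [← Finset.sum_mul, hmargZA u]
  rw [hsplit, Finset.sum_sub_distrib, Finset.sum_add_distrib, hB1, hB2, hB3] at key
  unfold entropy
  show -∑ p : S × T × U, a p * Real.log (a p) + -∑ u, pA u * Real.log (pA u) ≤
    -∑ q : S × U, pZA q * Real.log (pZA q) + -∑ q : T × U, pYA q * Real.log (pYA q)
  linarith

end A

/-- Swap the two components of a product. -/
def swapE (T U : Type*) : T × U ≃ U × T :=
  ⟨fun p => (p.2, p.1), fun p => (p.2, p.1), fun p => rfl, fun p => rfl⟩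

/-- Swap the last two components of a triple. -/
def midswapE (S T U : Type*) : S × T × U ≃ S × U × T :=
  ⟨fun p => (p.1, p.2.2, p.2.1), fun p => (p.1, p.2.2, p.2.1), fun p => rfl, fun p => rfl⟩

/-- Rotate the first component of a triple to the middle. -/
def rotE (S T U : Type*) : S × T × U ≃ T × S × U :=
  ⟨fun p => (p.2.1, p.1, p.2.2), fun p => (p.2.1, p.1, p.2.2),
    fun p => rfl, fun p => rfl⟩

end ExtremeBiasAux

/-- **Proposition 1.** If `H(Y|A) = 0` (extreme attribute bias) and `I(Z;A) = 0`
(the attribute is removed from the feature), then `I(Z;Y) = 0`. -/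
theorem mutualInfo_eq_zero_of_extreme_bias
    {Ω S T U : Type*} [MeasurableSpace Ω]
    [Fintype S] [Nonempty S] [MeasurableSpace S] [MeasurableSingletonClass S]
    [Fintype T] [Nonempty T] [MeasurableSpace T] [MeasurableSingletonClass T]
    [Fintype U] [Nonempty U] [MeasurableSpace U] [MeasurableSingletonClass U]
    (P : Measure Ω) [IsProbabilityMeasure P]
    (Z : Ω → S) (Y : Ω → T) (A : Ω → U)
    (hZ : Measurable Z) (hY : Measurable Y) (hA : Measurable A)
    (hYA : condEntropy P Y A = 0) (hZA : mutualInfo P Z A = 0) :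
    mutualInfo P Z Y = 0 := by
  have h2 := ExtremeBiasAux.submod (P := P) hZ hA hY
  have e1 : entropy P (fun ω => (A ω, Y ω)) = entropy P (fun ω => (Y ω, A ω)) :=
    ExtremeBiasAux.entropy_comp_equiv (fun ω => (Y ω, A ω)) (ExtremeBiasAux.swapE T U)
  have e2 : entropy P (fun ω => (Z ω, A ω, Y ω)) = entropy P (fun ω => (Z ω, Y ω, A ω)) :=
    ExtremeBiasAux.entropy_comp_equiv (fun ω => (Z ω, Y ω, A ω)) (ExtremeBiasAux.midswapE S T U)
  have e3 : entropy P (fun ω => (Y ω, Z ω, A ω)) = entropy P (fun ω => (Z ω, Y ω, A ω)) :=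
    ExtremeBiasAux.entropy_comp_equiv (fun ω => (Z ω, Y ω, A ω)) (ExtremeBiasAux.rotE S T U)
  have h3 : entropy P (fun ω => (Z ω, A ω)) ≤ entropy P (fun ω => (Y ω, Z ω, A ω)) :=
    ExtremeBiasAux.entropy_snd_le hY (hZ.prodMk hA)
  have h4 := ExtremeBiasAux.mutualInfo_nonneg (P := P) hZ hY
  rw [e3] at h3
  rw [e1, e2] at h2
  unfold condEntropy at hYA
  unfold mutualInfo at hZA h4 ⊢
  linarith
end

section
/- Let Z, Y, A be finitely-valued random variables on a common probability space. If I(Z;A) = 0, then I(Z;Y) ≤ H(Y|A). (Remark 2: when the protected attribute is successfully removed from the feature, the model's best attainable performance is bounded by the strength of the attribute bias.) -/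
open MeasureTheory ProbabilityTheory

/-- Superadditivity-type bound: `∑ xᵢ log xᵢ ≤ (∑ xᵢ) log (∑ xᵢ)` for nonnegative `xᵢ`. -/
lemma sum_mul_log_le_sum_mul_log_sum {ι : Type*} (t : Finset ι) (x : ι → ℝ)
    (hx : ∀ i ∈ t, 0 ≤ x i) :
    ∑ i ∈ t, x i * Real.log (x i) ≤ (∑ i ∈ t, x i) * Real.log (∑ i ∈ t, x i) := by
  calc ∑ i ∈ t, x i * Real.log (x i)
      ≤ ∑ i ∈ t, x i * Real.log (∑ j ∈ t, x j) := by
        apply Finset.sum_le_sum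
        intro i hi
        rcases (hx i hi).eq_or_lt with h | h
        · simp [← h]
        · exact mul_le_mul_of_nonneg_left
            (Real.log_le_log h (Finset.single_le_sum hx hi)) (hx i hi)
    _ = (∑ i ∈ t, x i) * Real.log (∑ i ∈ t, x i) := (Finset.sum_mul _ _ _).symm

/-- Reindexing of a sum over a triple product type. -/
lemma prod_sum_triple {S T U : Type*} [Fintype S] [Fintype T] [Fintype U]
    (f : S → T → U → ℝ) :
    ∑ i : S × T × U, f i.1 i.2.1 i.2.2 = ∑ s, ∑ t, ∑ u, f s t u := by
  rw [Fintype.sum_prod_type]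
  exact Finset.sum_congr rfl fun s _ => Fintype.sum_prod_type _

/-- Submodularity-type inequality for `x log x` sums: with `L` denoting `∑ q log q` of
the indicated marginal, `L(Z,Y) + L(Y,A) ≤ L(Z,Y,A) + L(Y)`. -/
lemma submod_aux {S T U : Type*} [Fintype S] [Fintype T] [Fintype U]
    (p : S → T → U → ℝ) (hp : ∀ s t u, 0 ≤ p s t u)
    (htot : ∑ s, ∑ t, ∑ u, p s t u = 1) :
    (∑ s, ∑ t, (∑ u, p s t u) * Real.log (∑ u, p s t u))
      + (∑ t, ∑ u, (∑ s, p s t u) * Real.log (∑ s, p s t u))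
    ≤ (∑ s, ∑ t, ∑ u, p s t u * Real.log (p s t u))
      + (∑ t, (∑ s, ∑ u, p s t u) * Real.log (∑ s, ∑ u, p s t u)) := by
  set q1 : S → T → ℝ := fun s t => ∑ u, p s t u with hq1def
  set q2 : T → U → ℝ := fun t u => ∑ s, p s t u with hq2def
  set r : T → ℝ := fun t => ∑ s, ∑ u, p s t u with hrdef
  have hq1 : ∀ s t, 0 ≤ q1 s t := fun s t => Finset.sum_nonneg fun u _ => hp s t u
  have hq2 : ∀ t u, 0 ≤ q2 t u := fun t u => Finset.sum_nonneg fun s _ => hp s t u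
  have hr : ∀ t, 0 ≤ r t := fun t => Finset.sum_nonneg fun s _ => hq1 s t
  have hrq1 : ∀ t, r t = ∑ s, q1 s t := fun t => rfl
  have hrq2 : ∀ t, r t = ∑ u, q2 t u := fun t => Finset.sum_comm
  have hpq1 : ∀ s t u, p s t u ≤ q1 s t := fun s t u =>
    Finset.single_le_sum (fun u _ => hp s t u) (Finset.mem_univ u)
  have hpq2 : ∀ s t u, p s t u ≤ q2 t u := fun s t u =>
    Finset.single_le_sum (fun s _ => hp s t u) (Finset.mem_univ s)
  have hq1r : ∀ s t, q1 s t ≤ r t := fun s t => by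
    rw [hrq1]
    exact Finset.single_le_sum (fun s _ => hq1 s t) (Finset.mem_univ s)
  set w : S × T × U → ℝ :=
    fun i => if r i.2.1 = 0 then 0 else q1 i.1 i.2.1 * q2 i.2.1 i.2.2 / r i.2.1 with hwdef
  set x : S × T × U → ℝ :=
    fun i => if w i = 0 then 0 else p i.1 i.2.1 i.2.2 / w i with hxdef
  have hw0 : ∀ i, 0 ≤ w i := by
    intro i
    by_cases h : r i.2.1 = 0
    · simp [hwdef, h]
    · simp only [hwdef, h, if_false]
      exact div_nonneg (mul_nonneg (hq1 _ _) (hq2 _ _)) (hr _)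
  have hx0 : ∀ i, 0 ≤ x i := by
    intro i
    by_cases h : w i = 0
    · simp [hxdef, h]
    · simp only [hxdef, h, if_false]
      exact div_nonneg (hp _ _ _) (hw0 i)
  have hpw : ∀ i : S × T × U, p i.1 i.2.1 i.2.2 ≠ 0 → 0 < w i := by
    intro i hpne
    have hppos : 0 < p i.1 i.2.1 i.2.2 := (hp _ _ _).lt_of_ne (Ne.symm hpne)
    have hq1pos : 0 < q1 i.1 i.2.1 := lt_of_lt_of_le hppos (hpq1 _ _ _)
    have hq2pos : 0 < q2 i.2.1 i.2.2 := lt_of_lt_of_le hppos (hpq2 _ _ _)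
    have hrpos : 0 < r i.2.1 := lt_of_lt_of_le hq1pos (hq1r _ _)
    simp only [hwdef, hrpos.ne', if_false]
    positivity
  have hwp : ∀ i : S × T × U, w i = 0 → p i.1 i.2.1 i.2.2 = 0 := by
    intro i hwi
    by_contra hne
    exact (hpw i hne).ne' hwi
  have hwx : ∀ i, w i * x i = p i.1 i.2.1 i.2.2 := by
    intro i
    by_cases h : w i = 0
    · simp [hxdef, h, (hwp i h)]
    · simp only [hxdef, h, if_false]
      field_simp
  have hwsum : ∑ i : S × T × U, w i = 1 := by
    have h1 : ∑ i : S × T × U, w i = ∑ s, ∑ t, ∑ u, w (s, t, u) :=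
      prod_sum_triple fun s t u => w (s, t, u)
    rw [h1, Finset.sum_comm]
    have hinner : ∀ t : T, ∑ s : S, ∑ u : U, w (s, t, u) = r t := by
      intro t
      by_cases h : r t = 0
      · simp [hwdef, h]
      · simp only [hwdef, h, if_false]
        have h2 : ∀ s : S, ∑ u : U, q1 s t * q2 t u / r t = q1 s t := by
          intro s
          rw [← Finset.sum_div, ← Finset.mul_sum, ← hrq2 t, mul_div_assoc,
            div_self h, mul_one]
        calc ∑ s : S, ∑ u : U, q1 s t * q2 t u / r t
            = ∑ s : S, q1 s t := Finset.sum_congr rfl fun s _ => h2 s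
          _ = r t := (hrq1 t).symm
    calc ∑ t, ∑ s, ∑ u, w (s, t, u) = ∑ t, r t := Finset.sum_congr rfl fun t _ => hinner t
      _ = ∑ t, ∑ s, ∑ u, p s t u := rfl
      _ = ∑ s, ∑ t, ∑ u, p s t u := Finset.sum_comm
      _ = 1 := htot
  -- Jensen's inequality for x ↦ x log x
  have hj : (0 : ℝ) ≤ ∑ i : S × T × U, w i * (x i * Real.log (x i)) := by
    have h := Real.convexOn_mul_log.map_sum_le (t := Finset.univ) (w := w) (p := x)
      (fun i _ => hw0 i) hwsum (fun i _ => hx0 i)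
    simp only [smul_eq_mul] at h
    have hsum1 : ∑ i : S × T × U, w i * x i = 1 := by
      have := prod_sum_triple fun s t u => w (s, t, u) * x (s, t, u)
      calc ∑ i : S × T × U, w i * x i = ∑ s, ∑ t, ∑ u, w (s, t, u) * x (s, t, u) := this
        _ = ∑ s, ∑ t, ∑ u, p s t u := by
            refine Finset.sum_congr rfl fun s _ => Finset.sum_congr rfl fun t _ =>
              Finset.sum_congr rfl fun u _ => hwx (s, t, u)
        _ = 1 := htot
    rw [hsum1] at h
    simpa using h
  have keyi : ∀ i : S × T × U, w i * (x i * Real.log (x i))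
      = p i.1 i.2.1 i.2.2 * Real.log (p i.1 i.2.1 i.2.2)
        - p i.1 i.2.1 i.2.2 * Real.log (q1 i.1 i.2.1)
        - p i.1 i.2.1 i.2.2 * Real.log (q2 i.2.1 i.2.2)
        + p i.1 i.2.1 i.2.2 * Real.log (r i.2.1) := by
    rintro ⟨s, t, u⟩
    by_cases hw : w (s, t, u) = 0
    · have hp0 : p s t u = 0 := hwp (s, t, u) hw
      simp [hw, hp0]
    · by_cases hp0 : p s t u = 0
      · have hx0' : x (s, t, u) = 0 := by
          show (if w (s, t, u) = 0 then 0 else p s t u / w (s, t, u)) = 0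
          rw [if_neg hw, hp0, zero_div]
        simp [hx0', hp0]
      · have hppos : 0 < p s t u := (hp s t u).lt_of_ne (Ne.symm hp0)
        have hbpos : 0 < q1 s t := hppos.trans_le (hpq1 s t u)
        have hcpos : 0 < q2 t u := hppos.trans_le (hpq2 s t u)
        have hdpos : 0 < r t := hbpos.trans_le (hq1r s t)
        have hwv : w (s, t, u) = q1 s t * q2 t u / r t := by
          simp [hwdef, hdpos.ne']
        have hxv : x (s, t, u) = p s t u * r t / (q1 s t * q2 t u) := by
          show (if w (s, t, u) = 0 then 0 else p s t u / w (s, t, u))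
            = p s t u * r t / (q1 s t * q2 t u)
          rw [if_neg hw, hwv, div_div_eq_mul_div]
        have hwxv : w (s, t, u) * x (s, t, u) = p s t u := hwx (s, t, u)
        calc w (s, t, u) * (x (s, t, u) * Real.log (x (s, t, u)))
            = (w (s, t, u) * x (s, t, u)) * Real.log (x (s, t, u)) := by ring
          _ = p s t u * Real.log (p s t u * r t / (q1 s t * q2 t u)) := by
              rw [hwxv, hxv]
          _ = _ := by
              rw [Real.log_div (by positivity) (by positivity),
                Real.log_mul hppos.ne' hdpos.ne', Real.log_mul hbpos.ne' hcpos.ne']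
              ring
  have key2 : ∑ i : S × T × U, w i * (x i * Real.log (x i))
      = (∑ s, ∑ t, ∑ u, p s t u * Real.log (p s t u))
        - (∑ s, ∑ t, q1 s t * Real.log (q1 s t))
        - (∑ t, ∑ u, q2 t u * Real.log (q2 t u))
        + (∑ t, r t * Real.log (r t)) := by
    have hA : ∑ i : S × T × U, p i.1 i.2.1 i.2.2 * Real.log (p i.1 i.2.1 i.2.2)
        = ∑ s, ∑ t, ∑ u, p s t u * Real.log (p s t u) :=
      prod_sum_triple fun s t u => p s t u * Real.log (p s t u)
    have hB : ∑ i : S × T × U, p i.1 i.2.1 i.2.2 * Real.log (q1 i.1 i.2.1)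
        = ∑ s, ∑ t, q1 s t * Real.log (q1 s t) := by
      rw [prod_sum_triple fun s t u => p s t u * Real.log (q1 s t)]
      exact Finset.sum_congr rfl fun s _ => Finset.sum_congr rfl fun t _ =>
        (Finset.sum_mul _ _ _).symm
    have hC : ∑ i : S × T × U, p i.1 i.2.1 i.2.2 * Real.log (q2 i.2.1 i.2.2)
        = ∑ t, ∑ u, q2 t u * Real.log (q2 t u) := by
      rw [prod_sum_triple fun s t u => p s t u * Real.log (q2 t u), Finset.sum_comm]
      refine Finset.sum_congr rfl fun t _ => ?_
      rw [Finset.sum_comm]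
      exact Finset.sum_congr rfl fun u _ => (Finset.sum_mul _ _ _).symm
    have hD : ∑ i : S × T × U, p i.1 i.2.1 i.2.2 * Real.log (r i.2.1)
        = ∑ t, r t * Real.log (r t) := by
      rw [prod_sum_triple fun s t u => p s t u * Real.log (r t), Finset.sum_comm]
      refine Finset.sum_congr rfl fun t _ => ?_
      have : ∀ s : S, ∑ u, p s t u * Real.log (r t) = q1 s t * Real.log (r t) :=
        fun s => (Finset.sum_mul _ _ _).symm
      simp only [this]
      rw [← Finset.sum_mul, ← hrq1]
    calc ∑ i : S × T × U, w i * (x i * Real.log (x i))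
        = ∑ i : S × T × U, (p i.1 i.2.1 i.2.2 * Real.log (p i.1 i.2.1 i.2.2)
            - p i.1 i.2.1 i.2.2 * Real.log (q1 i.1 i.2.1)
            - p i.1 i.2.1 i.2.2 * Real.log (q2 i.2.1 i.2.2)
            + p i.1 i.2.1 i.2.2 * Real.log (r i.2.1)) :=
          Finset.sum_congr rfl fun i _ => keyi i
      _ = _ := by
          rw [Finset.sum_add_distrib, Finset.sum_sub_distrib, Finset.sum_sub_distrib,
            hA, hB, hC, hD]
  have hfinal : (∑ s, ∑ t, q1 s t * Real.log (q1 s t))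
      + (∑ t, ∑ u, q2 t u * Real.log (q2 t u))
      ≤ (∑ s, ∑ t, ∑ u, p s t u * Real.log (p s t u)) + ∑ t, r t * Real.log (r t) := by
    rw [key2] at hj
    linarith
  simpa only [hq1def, hq2def, hrdef] using hfinal

/-- Finite partition of a measurable set along the fibers of a finitely valued map. -/
lemma measure_partition {Ω V : Type*} [MeasurableSpace Ω] [Fintype V] [MeasurableSpace V]
    [MeasurableSingletonClass V] (P : Measure Ω) [IsFiniteMeasure P]
    (X : Ω → V) (hX : Measurable X) {B : Set Ω} (hB : MeasurableSet B) :
    (P B).toReal = ∑ v, (P (B ∩ X ⁻¹' {v})).toReal := by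
  have hU : B = ⋃ v, B ∩ X ⁻¹' {v} := by
    ext ω; simp
  have hmeas : ∀ v, MeasurableSet (B ∩ X ⁻¹' {v}) := fun v =>
    hB.inter (hX (measurableSet_singleton v))
  have hdisj : Pairwise (Function.onFun Disjoint fun v => B ∩ X ⁻¹' {v}) := by
    intro v v' hvv'
    simp only [Function.onFun]
    apply Set.disjoint_left.mpr
    rintro ω ⟨_, hv⟩ ⟨_, hv'⟩
    simp only [Set.mem_preimage, Set.mem_singleton_iff] at hv hv'
    exact hvv' (hv ▸ hv')
  have h1 : P B = ∑' v, P (B ∩ X ⁻¹' {v}) := by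
    conv_lhs => rw [hU]
    exact measure_iUnion hdisj hmeas
  rw [h1, tsum_fintype, ENNReal.toReal_sum fun v _ => measure_ne_top P _]

/-- **Remark 2.** When the protected attribute is removed, `I(Z;A) = 0`, the
performance is bounded by the bias strength: `I(Z;Y) ≤ H(Y|A)`. -/
theorem mutualInfo_le_condEntropy_of_mutualInfo_eq_zero
    {Ω S T U : Type*} [MeasurableSpace Ω]
    [Fintype S] [Nonempty S] [MeasurableSpace S] [MeasurableSingletonClass S]
    [Fintype T] [Nonempty T] [MeasurableSpace T] [MeasurableSingletonClass T]
    [Fintype U] [Nonempty U] [MeasurableSpace U] [MeasurableSingletonClass U]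
    (P : Measure Ω) [IsProbabilityMeasure P]
    (Z : Ω → S) (Y : Ω → T) (A : Ω → U)
    (hZ : Measurable Z) (hY : Measurable Y) (hA : Measurable A)
    (hZA : mutualInfo P Z A = 0) :
    mutualInfo P Z Y ≤ condEntropy P Y A := by
  set p : S → T → U → ℝ :=
    fun s t u => (P (Z ⁻¹' {s} ∩ Y ⁻¹' {t} ∩ A ⁻¹' {u})).toReal with hpdef
  have mZ : ∀ s, MeasurableSet (Z ⁻¹' {s}) := fun s => hZ (measurableSet_singleton s)
  have mY : ∀ t, MeasurableSet (Y ⁻¹' {t}) := fun t => hY (measurableSet_singleton t)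
  have mA : ∀ u, MeasurableSet (A ⁻¹' {u}) := fun u => hA (measurableSet_singleton u)
  have hp : ∀ s t u, 0 ≤ p s t u := fun s t u => ENNReal.toReal_nonneg
  -- marginals
  have hZYm : ∀ s t, (P (Z ⁻¹' {s} ∩ Y ⁻¹' {t})).toReal = ∑ u, p s t u := by
    intro s t
    rw [measure_partition P A hA ((mZ s).inter (mY t))]
  have hZAm : ∀ s u, (P (Z ⁻¹' {s} ∩ A ⁻¹' {u})).toReal = ∑ t, p s t u := by
    intro s u
    rw [measure_partition P Y hY ((mZ s).inter (mA u))]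
    refine Finset.sum_congr rfl fun t _ => ?_
    have hset : Z ⁻¹' {s} ∩ A ⁻¹' {u} ∩ Y ⁻¹' {t} = Z ⁻¹' {s} ∩ Y ⁻¹' {t} ∩ A ⁻¹' {u} := by
      ext ω
      simp only [Set.mem_inter_iff, Set.mem_preimage, Set.mem_singleton_iff]
      tauto
    rw [hset]
  have hYAm : ∀ t u, (P (Y ⁻¹' {t} ∩ A ⁻¹' {u})).toReal = ∑ s, p s t u := by
    intro t u
    rw [measure_partition P Z hZ ((mY t).inter (mA u))]
    refine Finset.sum_congr rfl fun s _ => ?_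
    have hset : Y ⁻¹' {t} ∩ A ⁻¹' {u} ∩ Z ⁻¹' {s} = Z ⁻¹' {s} ∩ Y ⁻¹' {t} ∩ A ⁻¹' {u} := by
      ext ω
      simp only [Set.mem_inter_iff, Set.mem_preimage, Set.mem_singleton_iff]
      tauto
    rw [hset]
  have hZm : ∀ s, (P (Z ⁻¹' {s})).toReal = ∑ t, ∑ u, p s t u := by
    intro s
    rw [measure_partition P Y hY (mZ s)]
    exact Finset.sum_congr rfl fun t _ => hZYm s t
  have hYm : ∀ t, (P (Y ⁻¹' {t})).toReal = ∑ s, ∑ u, p s t u := by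
    intro t
    rw [measure_partition P Z hZ (mY t)]
    refine Finset.sum_congr rfl fun s _ => ?_
    rw [show Y ⁻¹' {t} ∩ Z ⁻¹' {s} = Z ⁻¹' {s} ∩ Y ⁻¹' {t} from Set.inter_comm _ _]
    exact hZYm s t
  have hAm : ∀ u, (P (A ⁻¹' {u})).toReal = ∑ s, ∑ t, p s t u := by
    intro u
    rw [measure_partition P Z hZ (mA u)]
    refine Finset.sum_congr rfl fun s _ => ?_
    rw [show A ⁻¹' {u} ∩ Z ⁻¹' {s} = Z ⁻¹' {s} ∩ A ⁻¹' {u} from Set.inter_comm _ _]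
    exact hZAm s u
  have htot : ∑ s, ∑ t, ∑ u, p s t u = 1 := by
    have h1 : ((P Set.univ).toReal : ℝ) = 1 := by simp
    rw [measure_partition P Z hZ MeasurableSet.univ] at h1
    rw [← h1]
    refine Finset.sum_congr rfl fun s _ => ?_
    rw [show Set.univ ∩ Z ⁻¹' {s} = Z ⁻¹' {s} from Set.univ_inter _]
    exact (hZm s).symm
  -- entropy computations
  have eZ : entropy P Z
      = -∑ s, (∑ t, ∑ u, p s t u) * Real.log (∑ t, ∑ u, p s t u) := by
    unfold entropy
    congr 1
    exact Finset.sum_congr rfl fun s _ => by rw [hZm s]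
  have eY : entropy P Y
      = -∑ t, (∑ s, ∑ u, p s t u) * Real.log (∑ s, ∑ u, p s t u) := by
    unfold entropy
    congr 1
    exact Finset.sum_congr rfl fun t _ => by rw [hYm t]
  have eA : entropy P A
      = -∑ u, (∑ s, ∑ t, p s t u) * Real.log (∑ s, ∑ t, p s t u) := by
    unfold entropy
    congr 1
    exact Finset.sum_congr rfl fun u _ => by rw [hAm u]
  have preZY : ∀ (s : S) (t : T),
      (fun ω => (Z ω, Y ω)) ⁻¹' {(s, t)} = Z ⁻¹' {s} ∩ Y ⁻¹' {t} := by
    intro s t; ext ω; simp [Prod.ext_iff]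
  have preZA : ∀ (s : S) (u : U),
      (fun ω => (Z ω, A ω)) ⁻¹' {(s, u)} = Z ⁻¹' {s} ∩ A ⁻¹' {u} := by
    intro s u; ext ω; simp [Prod.ext_iff]
  have preYA : ∀ (t : T) (u : U),
      (fun ω => (Y ω, A ω)) ⁻¹' {(t, u)} = Y ⁻¹' {t} ∩ A ⁻¹' {u} := by
    intro t u; ext ω; simp [Prod.ext_iff]
  have eZY : entropy P (fun ω => (Z ω, Y ω))
      = -∑ s, ∑ t, (∑ u, p s t u) * Real.log (∑ u, p s t u) := by
    unfold entropy
    congr 1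
    rw [Fintype.sum_prod_type]
    exact Finset.sum_congr rfl fun s _ => Finset.sum_congr rfl fun t _ => by
      rw [preZY s t, hZYm s t]
  have eZA : entropy P (fun ω => (Z ω, A ω))
      = -∑ s, ∑ u, (∑ t, p s t u) * Real.log (∑ t, p s t u) := by
    unfold entropy
    congr 1
    rw [Fintype.sum_prod_type]
    exact Finset.sum_congr rfl fun s _ => Finset.sum_congr rfl fun u _ => by
      rw [preZA s u, hZAm s u]
  have eYA : entropy P (fun ω => (Y ω, A ω))
      = -∑ t, ∑ u, (∑ s, p s t u) * Real.log (∑ s, p s t u) := by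
    unfold entropy
    congr 1
    rw [Fintype.sum_prod_type]
    exact Finset.sum_congr rfl fun t _ => Finset.sum_congr rfl fun u _ => by
      rw [preYA t u, hYAm t u]
  -- the two key inequalities
  have hmono : (∑ s, ∑ t, ∑ u, p s t u * Real.log (p s t u))
      ≤ ∑ s, ∑ u, (∑ t, p s t u) * Real.log (∑ t, p s t u) := by
    apply Finset.sum_le_sum
    intro s _
    rw [Finset.sum_comm]
    apply Finset.sum_le_sum
    intro u _
    exact sum_mul_log_le_sum_mul_log_sum _ _ fun t _ => hp s t u
  have hsub := submod_aux p hp htot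
  -- conclude
  unfold mutualInfo at hZA ⊢
  unfold condEntropy
  rw [eZ, eA, eZA] at hZA
  rw [eZ, eY, eZY, eYA, eA]
  linarith
end
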